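/- Let (g,γ) be a construction pair on an abelian group (X,+), and equip ℤ × X with the multiplication (i,x)·(j,y) = (i+j, g^{−j}(x)+y+∑_{k∈I(i+j,−j)} g^{−k}(γ(x,y))). Then this multiplication satisfies the Moufang identity u·((v·w)·u) = (u·v)·(w·u) for all u,v,w ∈ ℤ × X. -/

import Mathlib

/-- The interval `I(i,j)` of integers: `∅` if `i = j`, `{i,…,j-1}` if `i < j`,
and `{j,…,i-1}` if `j < i`. -/
noncomputable def I (i j : ℤ) : Finset ℤ := Finset.Ico (min i j) (max i j)

/-- A construction pair `(g, γ)` on an abelian group `(X, +)`. -/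
structure IsConstructionPair {X : Type*} [AddCommGroup X]
    (g : Equiv.Perm X) (γ : X → X → X) : Prop where
  symm : ∀ x y, γ x y = γ y x
  alt : ∀ x, γ x x = 0
  add_left : ∀ x y z, γ (x + y) z = γ x z + γ y z
  add_right : ∀ x y z, γ x (y + z) = γ x y + γ x z
  c1 : ∀ x y, g⁻¹ (g x + g y)
      = x + y + γ x y + g⁻¹ (γ x y) + g⁻¹ (g⁻¹ (γ x y))
  c2 : ∀ x y z, γ (γ x y) z = 0
  c3 : ∀ x y, g⁻¹ (γ x y) = γ (g x) y

/-- The multiplication of `ℤ ⋉_{(g,γ)} X` on `ℤ × X`: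
`(i,x)·(j,y) = (i+j, g^{-j}(x) + y + ∑_{k ∈ I(i+j,-j)} g^{-k}(γ(x,y)))`. -/
noncomputable def cmul {X : Type*} [AddCommGroup X] (g : Equiv.Perm X) (γ : X → X → X) :
    ℤ × X → ℤ × X → ℤ × X :=
  fun u v =>
    (u.1 + v.1,
      (g ^ (-v.1)) u.2 + v.2 + ∑ k ∈ I (u.1 + v.1) (-v.1), (g ^ (-k)) (γ u.2 v.2))

/-!
The values of `γ` lie in the radical of `γ`, which every power of `g` preserves and on which
`g` is additive, and each `g^k (γ x y)` has order at most two since `γ` is alternating. The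
integers `n` for which `g^n (a + b) = g^n a + g^n b + ∑_{k ∈ I(-n,2n)} g^{-k} (γ a b)` form a
subgroup of `ℤ`, and (C1) is the case `n = -1`. Because `I(i,l)` is the symmetric difference of
`I(i,j)` and `I(j,l)`, interval sums over a `γ`-orbit are additive along `ℤ` (Chasles). With these
rules both sides of the Moufang identity reduce to the same normal form: a combination of
`x, y, z` and interval sums of `γ(y,z)`, `γ(x,y)`, `γ(x,z)`.
-/

theorem Finset.sum_add_sum_eq_sum_symmDiff {ι M : Type*} [DecidableEq ι] [AddCommGroup M]
    {f : ι → M} (hf : ∀ i, f i + f i = 0) (s t : Finset ι) :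
    ∑ i ∈ s, f i + ∑ i ∈ t, f i = ∑ i ∈ symmDiff s t, f i := by
  have hinter : ∑ i ∈ s ∩ t, f i + ∑ i ∈ s ∩ t, f i = 0 := by
    rw [← Finset.sum_add_distrib]
    exact Finset.sum_eq_zero fun i _ => hf i
  rw [← Finset.sum_union_inter, symmDiff_eq_sup_sdiff_inf,
    ← Finset.sum_sdiff (Finset.inter_subset_union (s := s) (t := t))]
  simp only [Finset.sup_eq_union, Finset.inf_eq_inter]
  rw [add_assoc, hinter, add_zero]

theorem Equiv.Perm.zpow_apply_zpow_apply {α : Type*} (f : Equiv.Perm α) (m n : ℤ) (x : α) :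
    (f ^ m) ((f ^ n) x) = (f ^ (m + n)) x := by
  rw [zpow_add, Equiv.Perm.mul_apply]

theorem I_comm (i j : ℤ) : I i j = I j i := by
  rw [I, I, min_comm, max_comm]

theorem I_self (i : ℤ) : I i i = ∅ := by
  simp [I]

theorem mem_I {i j k : ℤ} : k ∈ I i j ↔ (i ≤ k ↔ ¬ j ≤ k) := by
  simp only [I, Finset.mem_Ico]
  omega

theorem I_symmDiff (i j l : ℤ) : symmDiff (I i j) (I j l) = I i l := by
  ext k
  simp only [Finset.mem_symmDiff, mem_I]
  omega

theorem I_sub (i j n : ℤ) : I (i - n) (j - n) = (I i j).map (addRightEmbedding (-n)) := by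
  ext k
  simp only [Finset.mem_map, addRightEmbedding_apply, mem_I]
  constructor
  · intro hk
    exact ⟨k + n, by omega, by omega⟩
  · rintro ⟨l, hl, rfl⟩
    omega

noncomputable def orbitSum {X : Type*} [AddCommGroup X] (g : Equiv.Perm X) (i j : ℤ) (c : X) :
    X :=
  ∑ k ∈ I i j, (g ^ (-k)) c

theorem cmul_mk {X : Type*} [AddCommGroup X] (g : Equiv.Perm X) (γ : X → X → X)
    (i j : ℤ) (p q : X) :
    cmul g γ (i, p) (j, q) = (i + j, (g ^ (-j)) p + q + orbitSum g (i + j) (-j) (γ p q)) :=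
  rfl

namespace orbitSum

variable {X : Type*} [AddCommGroup X] {g : Equiv.Perm X}

theorem comm (i j : ℤ) (c : X) : orbitSum g i j c = orbitSum g j i c := by
  rw [orbitSum, orbitSum, I_comm]

@[simp]
theorem self (i : ℤ) (c : X) : orbitSum g i i c = 0 := by
  simp [orbitSum, I_self]

theorem add_orbitSum {c : X} (hc : ∀ k : ℤ, (g ^ k) c + (g ^ k) c = 0) (i j l : ℤ) :
    orbitSum g i j c + orbitSum g j l c = orbitSum g i l c := by
  rw [orbitSum, orbitSum, orbitSum, Finset.sum_add_sum_eq_sum_symmDiff (fun k => hc (-k)),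
    I_symmDiff]

theorem zpow_apply (i j n : ℤ) (c : X) :
    orbitSum g i j ((g ^ n) c) = orbitSum g (i - n) (j - n) c := by
  rw [orbitSum, orbitSum, I_sub, Finset.sum_map]
  refine Finset.sum_congr rfl fun k _ => ?_
  rw [addRightEmbedding_apply, Equiv.Perm.zpow_apply_zpow_apply, neg_add, neg_neg]

end orbitSum

namespace IsConstructionPair

variable {X : Type*} [AddCommGroup X]

def AddFormulaAt (g : Equiv.Perm X) (γ : X → X → X) (n : ℤ) : Prop :=
  ∀ a b, (g ^ n) (a + b) = (g ^ n) a + (g ^ n) b + orbitSum g (-n) (2 * n) (γ a b)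

variable {g : Equiv.Perm X} {γ : X → X → X} (h : IsConstructionPair g γ)
include h

theorem gamma_zero_left (x : X) : γ 0 x = 0 := by
  simpa using h.add_left 0 0 x

theorem gamma_zero_right (x : X) : γ x 0 = 0 := by
  rw [h.symm, h.gamma_zero_left]

theorem gamma_add_self (x y : X) : γ x y + γ x y = 0 := by
  have := h.alt (x + y)
  rwa [h.add_left, h.add_right, h.add_right, h.alt, h.alt, h.symm y x, zero_add, add_zero] at this

theorem inv_apply_zero : g⁻¹ 0 = 0 := by
  simpa [h.gamma_zero_right, h.alt] using h.c3 0 0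

theorem zpow_apply_zero (n : ℤ) : (g ^ n) 0 = 0 :=
  Equiv.Perm.zpow_apply_eq_self_of_apply_eq_self
    (Equiv.Perm.inv_eq_iff_eq.mp h.inv_apply_zero).symm n

theorem gamma_zpow_left (n : ℤ) (x y : X) : γ ((g ^ n) x) y = (g ^ (-n)) (γ x y) := by
  induction n using Int.induction_on generalizing x with
  | zero => rfl
  | succ n ih =>
    rw [zpow_add_one, Equiv.Perm.mul_apply, ih, ← h.c3, neg_add, zpow_add, zpow_neg_one,
      Equiv.Perm.mul_apply]
  | pred n ih =>
    have hinv : γ (g⁻¹ x) y = g (γ x y) := by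
      simpa using Equiv.Perm.inv_eq_iff_eq.mp (h.c3 (g⁻¹ x) y)
    rw [zpow_sub_one, Equiv.Perm.mul_apply, ih, hinv, neg_sub, sub_eq_add_neg, neg_neg,
      add_comm, zpow_add, zpow_one, Equiv.Perm.mul_apply]

theorem gamma_zpow_right (n : ℤ) (x y : X) : γ x ((g ^ n) y) = (g ^ (-n)) (γ x y) := by
  rw [h.symm, h.gamma_zpow_left, h.symm]

theorem gamma_zpow_zpow (m n : ℤ) (x y : X) :
    γ ((g ^ m) x) ((g ^ n) y) = (g ^ (-(m + n))) (γ x y) := by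
  rw [h.gamma_zpow_left, h.gamma_zpow_right, Equiv.Perm.zpow_apply_zpow_apply, neg_add]

theorem zpow_gamma_add_self (n : ℤ) (x y : X) : (g ^ n) (γ x y) + (g ^ n) (γ x y) = 0 := by
  rw [← neg_neg n, ← h.gamma_zpow_left, h.gamma_add_self]

def radical : AddSubgroup X where
  carrier := {c | ∀ z, γ c z = 0}
  zero_mem' := h.gamma_zero_left
  add_mem' {c d} hc hd z := by rw [h.add_left, hc, hd, add_zero]
  neg_mem' {c} hc z := by
    have := h.add_left c (-c) z
    rwa [add_neg_cancel, h.gamma_zero_left, hc, zero_add, eq_comm] at this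

theorem gamma_mem_radical (x y : X) : γ x y ∈ h.radical :=
  h.c2 x y

theorem gamma_eq_zero_of_mem_radical {c : X} (hc : c ∈ h.radical) (z : X) : γ z c = 0 := by
  rw [h.symm]
  exact hc z

theorem zpow_apply_mem_radical {c : X} (hc : c ∈ h.radical) (n : ℤ) : (g ^ n) c ∈ h.radical :=
  fun z => by rw [h.gamma_zpow_left, hc, h.zpow_apply_zero]

theorem inv_apply_mem_radical {c : X} (hc : c ∈ h.radical) : g⁻¹ c ∈ h.radical := by
  simpa only [zpow_neg_one] using h.zpow_apply_mem_radical hc (-1)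

theorem apply_add_of_mem_radical (a : X) {c : X} (hc : c ∈ h.radical) :
    g (a + c) = g a + g c := by
  have := h.c1 a c
  simp only [h.gamma_eq_zero_of_mem_radical hc, h.inv_apply_zero, add_zero] at this
  exact (Equiv.Perm.inv_eq_iff_eq.mp this).symm

theorem inv_apply_add_of_mem_radical (a : X) {c : X} (hc : c ∈ h.radical) :
    g⁻¹ (a + c) = g⁻¹ a + g⁻¹ c := by
  rw [Equiv.Perm.inv_eq_iff_eq, h.apply_add_of_mem_radical _ (h.inv_apply_mem_radical hc),
    Equiv.Perm.coe_inv, g.apply_symm_apply, g.apply_symm_apply]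

theorem zpow_add_of_mem_radical (n : ℤ) (a : X) {c : X} (hc : c ∈ h.radical) :
    (g ^ n) (a + c) = (g ^ n) a + (g ^ n) c := by
  induction n using Int.induction_on generalizing a c with
  | zero => rfl
  | succ n ih =>
    have hc' : g c ∈ h.radical := by simpa only [zpow_one] using h.zpow_apply_mem_radical hc 1
    simp only [zpow_add_one, Equiv.Perm.mul_apply, h.apply_add_of_mem_radical _ hc, ih _ hc']
  | pred n ih =>
    simp only [zpow_sub_one, Equiv.Perm.mul_apply, h.inv_apply_add_of_mem_radical _ hc,
      ih _ (h.inv_apply_mem_radical hc)]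

theorem zpow_apply_sum_of_mem_radical (n : ℤ) {ι : Type*} (s : Finset ι) {f : ι → X}
    (hf : ∀ i ∈ s, f i ∈ h.radical) :
    (g ^ n) (∑ i ∈ s, f i) = ∑ i ∈ s, (g ^ n) (f i) := by
  classical
  induction s using Finset.induction_on with
  | empty => simp [h.zpow_apply_zero]
  | insert i s hi ih =>
    rw [Finset.sum_insert hi, Finset.sum_insert hi, add_comm, add_comm ((g ^ n) (f i)),
      h.zpow_add_of_mem_radical n _ (hf i (Finset.mem_insert_self i s)),
      ih fun j hj => hf j (Finset.mem_insert_of_mem hj)]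

theorem orbitSum_zero (i j : ℤ) : orbitSum g i j 0 = 0 :=
  Finset.sum_eq_zero fun k _ => h.zpow_apply_zero (-k)

theorem orbitSum_mem_radical {c : X} (hc : c ∈ h.radical) (i j : ℤ) :
    orbitSum g i j c ∈ h.radical :=
  AddSubgroup.sum_mem _ fun k _ => h.zpow_apply_mem_radical hc (-k)

theorem gamma_orbitSum_left {c : X} (hc : c ∈ h.radical) (i j : ℤ) (z : X) :
    γ (orbitSum g i j c) z = 0 :=
  h.orbitSum_mem_radical hc i j z

theorem gamma_orbitSum_right {c : X} (hc : c ∈ h.radical) (i j : ℤ) (z : X) :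
    γ z (orbitSum g i j c) = 0 :=
  h.gamma_eq_zero_of_mem_radical (h.orbitSum_mem_radical hc i j) z

theorem zpow_apply_orbitSum {c : X} (hc : c ∈ h.radical) (n i j : ℤ) :
    (g ^ n) (orbitSum g i j c) = orbitSum g (i - n) (j - n) c := by
  rw [orbitSum, h.zpow_apply_sum_of_mem_radical n _ fun k _ => h.zpow_apply_mem_radical hc (-k),
    ← orbitSum.zpow_apply, orbitSum]
  refine Finset.sum_congr rfl fun k _ => ?_
  rw [Equiv.Perm.zpow_apply_zpow_apply, Equiv.Perm.zpow_apply_zpow_apply, add_comm]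

theorem orbitSum_add (c : X) {d : X} (hd : d ∈ h.radical) (i j : ℤ) :
    orbitSum g i j (c + d) = orbitSum g i j c + orbitSum g i j d := by
  rw [orbitSum, orbitSum, orbitSum, ← Finset.sum_add_distrib]
  exact Finset.sum_congr rfl fun k _ => h.zpow_add_of_mem_radical (-k) c hd

theorem orbitSum_gamma_add (x y : X) (i j l : ℤ) :
    orbitSum g i j (γ x y) + orbitSum g j l (γ x y) = orbitSum g i l (γ x y) :=
  orbitSum.add_orbitSum (h.zpow_gamma_add_self · x y) i j l

theorem orbitSum_gamma_add' (x y : X) (i j l : ℤ) :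
    orbitSum g i j (γ x y) + orbitSum g i l (γ x y) = orbitSum g j l (γ x y) := by
  rw [orbitSum.comm i j, h.orbitSum_gamma_add]

theorem orbitSum_gamma_add_self (x y : X) (i j : ℤ) :
    orbitSum g i j (γ x y) + orbitSum g i j (γ x y) = 0 := by
  rw [h.orbitSum_gamma_add', orbitSum.self]

theorem inv_apply_add_apply (x y : X) :
    g⁻¹ (g x + g y) = x + y + orbitSum g 0 3 (γ x y) := by
  have hI : I 0 3 = {0, 1, 2} := by decide
  rw [h.c1, orbitSum, hI, Finset.sum_insert (by decide), Finset.sum_insert (by decide),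
    Finset.sum_singleton, show (-2 : ℤ) = -1 + -1 by norm_num, zpow_add, Equiv.Perm.mul_apply,
    neg_zero, zpow_zero, zpow_neg_one, Equiv.Perm.one_apply]
  abel

theorem addFormulaAt_neg_one : AddFormulaAt g γ (-1) := by
  intro a b
  have hc1 := h.inv_apply_add_apply ((g ^ (-1 : ℤ)) a) ((g ^ (-1 : ℤ)) b)
  rw [h.gamma_zpow_zpow, orbitSum.zpow_apply] at hc1
  simp only [zpow_neg_one, Equiv.Perm.coe_inv, Equiv.apply_symm_apply] at hc1 ⊢
  rw [hc1, orbitSum.comm]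
  norm_num

theorem addFormulaAt_neg {n : ℤ} (hn : AddFormulaAt g γ n) : AddFormulaAt g γ (-n) := by
  intro a b
  have cancel : ∀ x, (g ^ (-n)) ((g ^ n) x) = x := fun x => by
    rw [Equiv.Perm.zpow_apply_zpow_apply, neg_add_cancel, zpow_zero, Equiv.Perm.one_apply]
  obtain ⟨a, rfl⟩ := (g ^ n).surjective a
  obtain ⟨b, rfl⟩ := (g ^ n).surjective b
  have hs : (g ^ (-n)) (orbitSum g (-n) (2 * n) (γ a b))
      = orbitSum g (-(-n)) (2 * -n) (γ ((g ^ n) a) ((g ^ n) b)) := by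
    rw [h.gamma_zpow_zpow, h.zpow_apply_orbitSum (h.gamma_mem_radical a b), orbitSum.zpow_apply,
      orbitSum.comm]
    ring_nf
  have key := congrArg (g ^ (-n)) (hn a b)
  rw [h.zpow_add_of_mem_radical _ _ (h.orbitSum_mem_radical (h.gamma_mem_radical a b) _ _), hs,
    cancel] at key
  rw [cancel, cancel, key, add_assoc, h.orbitSum_gamma_add_self, add_zero]

theorem addFormulaAt_add {m n : ℤ} (hm : AddFormulaAt g γ m) (hn : AddFormulaAt g γ n) :
    AddFormulaAt g γ (m + n) := by
  intro a b
  have hc := h.gamma_mem_radical a b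
  have hs : (g ^ m) (orbitSum g (-n) (2 * n) (γ a b))
      = orbitSum g (-(m + n)) (2 * n - m) (γ a b) := by
    rw [h.zpow_apply_orbitSum hc]
    ring_nf
  have hγ : orbitSum g (-m) (2 * m) (γ ((g ^ n) a) ((g ^ n) b))
      = orbitSum g (2 * n - m) (2 * (m + n)) (γ a b) := by
    rw [h.gamma_zpow_zpow, orbitSum.zpow_apply]
    ring_nf
  calc (g ^ (m + n)) (a + b)
      = (g ^ m) ((g ^ n) a + (g ^ n) b) + (g ^ m) (orbitSum g (-n) (2 * n) (γ a b)) := by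
        rw [zpow_add, Equiv.Perm.mul_apply, hn,
          h.zpow_add_of_mem_radical _ _ (h.orbitSum_mem_radical hc _ _)]
    _ = (g ^ (m + n)) a + (g ^ (m + n)) b + (orbitSum g (-(m + n)) (2 * n - m) (γ a b)
          + orbitSum g (2 * n - m) (2 * (m + n)) (γ a b)) := by
        rw [hm, hs, hγ, zpow_add, Equiv.Perm.mul_apply, Equiv.Perm.mul_apply]
        abel
    _ = _ := by rw [h.orbitSum_gamma_add]

theorem zpow_apply_add (n : ℤ) (a b : X) :
    (g ^ n) (a + b) = (g ^ n) a + (g ^ n) b + orbitSum g (-n) (2 * n) (γ a b) := by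
  have hneg := h.addFormulaAt_neg_one
  have hone : AddFormulaAt g γ 1 := by simpa using h.addFormulaAt_neg hneg
  revert a b
  induction n using Int.induction_on with
  | zero => simp
  | succ n ih => exact h.addFormulaAt_add ih hone
  | pred n ih => exact h.addFormulaAt_add ih hneg

theorem cmul_cmul_mk (i j k : ℤ) (x y z : X) :
    cmul g γ (cmul g γ (j, y) (k, z)) (i, x) = (j + k + i, (g ^ (-(i + k))) y + (g ^ (-i)) z + x
      + orbitSum g (i + j + k) (-2 * i - k) (γ y z) + orbitSum g (i + j) (-i - k) (γ x y)
      + orbitSum g (i + j + k) (-i) (γ x z)) := by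
  rw [cmul_mk, cmul_mk, Prod.mk.injEq]
  refine ⟨by ring, ?_⟩
  simp only [h.zpow_apply_add, h.add_left, h.gamma_zpow_left, h.gamma_orbitSum_left,
    h.gamma_orbitSum_right, h.gamma_mem_radical, h.zpow_apply_orbitSum, orbitSum.zpow_apply,
    h.orbitSum_add, h.orbitSum_zero, h.zpow_apply_zero, add_zero, Equiv.Perm.zpow_apply_zpow_apply]
  rw [h.symm z x, h.symm y x, ← h.orbitSum_gamma_add y z (i + j + k) (i - k)]
  ring_nf
  abel

theorem moufang_left_mk (i j k : ℤ) (x y z : X) :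
    cmul g γ (i, x) (cmul g γ (cmul g γ (j, y) (k, z)) (i, x)) = (2 * i + j + k,
      (g ^ (-(i + j + k))) x + x + (g ^ (-(i + k))) y + (g ^ (-i)) z
      + orbitSum g (i + j + k) (-2 * i - k) (γ y z)
      + orbitSum g (-i - k) (-2 * i - j - 2 * k) (γ x y)
      + orbitSum g (-i) (-2 * i - j - k) (γ x z)) := by
  rw [h.cmul_cmul_mk, cmul_mk, Prod.mk.injEq]
  refine ⟨by ring, ?_⟩
  simp only [h.add_right, h.gamma_zpow_right, h.alt, h.gamma_orbitSum_right, h.gamma_mem_radical,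
    h.zpow_apply_mem_radical, orbitSum.zpow_apply, h.orbitSum_add, add_zero]
  rw [← h.orbitSum_gamma_add' x y (i + j) (-i - k),
    ← h.orbitSum_gamma_add' x z (i + j + k) (-i)]
  ring_nf
  abel

theorem moufang_right_mk (i j k : ℤ) (x y z : X) :
    cmul g γ (cmul g γ (i, x) (j, y)) (cmul g γ (k, z) (i, x)) = (2 * i + j + k,
      (g ^ (-(i + j + k))) x + x + (g ^ (-(i + k))) y + (g ^ (-i)) z
      + orbitSum g (i + j + k) (-2 * i - k) (γ y z)
      + orbitSum g (-i - k) (-2 * i - j - 2 * k) (γ x y)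
      + orbitSum g (-i) (-2 * i - j - k) (γ x z)) := by
  rw [cmul_mk, cmul_mk, cmul_mk, Prod.mk.injEq]
  refine ⟨by ring, ?_⟩
  simp only [h.zpow_apply_add, h.add_left, h.add_right, h.gamma_zpow_left, h.gamma_zpow_right,
    h.alt, h.gamma_orbitSum_left, h.gamma_orbitSum_right, h.gamma_mem_radical,
    h.zpow_apply_mem_radical, ← add_assoc, h.zpow_apply_orbitSum, orbitSum.zpow_apply,
    h.orbitSum_add, h.orbitSum_zero, h.zpow_apply_zero, add_zero, Equiv.Perm.zpow_apply_zpow_apply]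
  rw [h.symm z x, h.symm y x, ← h.orbitSum_gamma_add' x y (2 * i + j + k) (-i - k),
    ← h.orbitSum_gamma_add x y (2 * i + j + k) (i + k - j) (-2 * i - j - 2 * k),
    ← h.orbitSum_gamma_add' x z (i + k) (-i)]
  ring_nf
  abel

end IsConstructionPair

theorem stmt_9 {X : Type*} [AddCommGroup X] (g : Equiv.Perm X) (γ : X → X → X)
    (h : IsConstructionPair g γ) (u v w : ℤ × X) :
    cmul g γ u (cmul g γ (cmul g γ v w) u) = cmul g γ (cmul g γ u v) (cmul g γ w u) := by
  obtain ⟨i, x⟩ := u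
  obtain ⟨j, y⟩ := v
  obtain ⟨k, z⟩ := w
  rw [h.moufang_left_mk, h.moufang_right_mk]
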